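/- arXiv:0710.5877 — 2 statements merged into one kernel-verified Lean document; each statement's English description precedes it below -/
import Mathlib

section
/- In the rational double affine Hecke–Clifford algebra H^c_{A_{n−1}}(u), for every integer l ≥ 0 and all i ≠ j: [y_i, x_j^l] = u·( Σ_{a=0}^{l−1} x_j^a x_i^{l−1−a} + (Σ_{a=0}^{l−1} (−1)^{l−1−a} x_j^a x_i^{l−1−a})·c_i c_j )·s_{ij}, and [y_i, x_i^l] = −u·Σ_{k≠i} ( Σ_{a=0}^{l−1} x_i^a x_k^{l−1−a} + (Σ_{a=0}^{l−1} (−1)^{l−1−a} x_i^a x_k^{l−1−a})·c_k c_i )·s_{ki}. -/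
noncomputable section

abbrev SignFn (n : ℕ) := Fin n → ℤˣ

/-- The permutation action on sign functions. -/
def permAut (n : ℕ) : Equiv.Perm (Fin n) →* MulAut (SignFn n) where
  toFun σ :=
    { toFun := fun f => f ∘ σ.symm
      invFun := fun f => f ∘ σ
      left_inv := fun f => by ext k; simp
      right_inv := fun f => by ext k; simp
      map_mul' := fun f g => rfl }
  map_one' := by ext f k; simp; rfl
  map_mul' := fun σ τ => by
    ext f k
    show (f ((σ * τ).symm k) : ℤ) = f (τ.symm (σ.symm k))
    rw [Equiv.Perm.mul_def, Equiv.symm_trans_apply]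

/-- The hyperoctahedral group `W_{B_n}` of signed permutations, as a semidirect product. -/
abbrev WB (n : ℕ) := SignFn n ⋊[permAut n] Equiv.Perm (Fin n)

/-- the transposition `s_{ij}` in `W_{B_n}`. -/
def sB {n : ℕ} (i j : Fin n) : WB n := ⟨1, Equiv.swap i j⟩

/-- the transposition with sign changes `s̄_{ij}` in `W_{B_n}`. -/
def sbarB {n : ℕ} (i j : Fin n) : WB n :=
  ⟨fun k => if k = i ∨ k = j then -1 else 1, Equiv.swap i j⟩

/-- the sign change `τ_i` at `i` in `W_{B_n}`. -/
def tauB {n : ℕ} (i : Fin n) : WB n := ⟨fun k => if k = i then -1 else 1, 1⟩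

/-- The signed-permutation action of `w ∈ W_{B_n}` on a basis vector `e_i`:
`w(e_i) = (sign) • e_{(index)}`; we record the pair (sign, index). -/
def actB {n : ℕ} (w : WB n) (i : Fin n) : ℂ × Fin n :=
  (((w.left (w.right i) : ℤ) : ℂ), w.right i)

/-- `W_{D_n}` as the subgroup of even signed permutations inside `W_{B_n}`. -/
def WDsub (n : ℕ) : Subgroup (WB n) where
  carrier := {w | ∏ k, w.left k = 1}
  one_mem' := by simp
  mul_mem' := by
    intro a b ha hb
    simp only [Set.mem_setOf_eq] at *
    have h1 : (a * b).left = a.left * (permAut n a.right) b.left := rfl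
    rw [h1]
    rw [show (∏ k, (a.left * (permAut n a.right) b.left) k) = (∏ k, a.left k) * ∏ k, (permAut n a.right) b.left k from Finset.prod_mul_distrib, ha, one_mul]
    calc ∏ k, (permAut n a.right) b.left k = ∏ k, b.left (a.right.symm k) := rfl
      _ = ∏ k, b.left k := Equiv.prod_comp a.right.symm b.left
      _ = 1 := hb
  inv_mem' := by
    intro a ha
    simp only [Set.mem_setOf_eq] at *
    have h1 : (a⁻¹).left = (permAut n a.right⁻¹) a.left⁻¹ := rfl
    rw [h1]
    calc ∏ k, (permAut n a.right⁻¹) a.left⁻¹ k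
        = ∏ k, a.left⁻¹ ((a.right⁻¹).symm k) := rfl
      _ = ∏ k, (a.left k)⁻¹ := Equiv.prod_comp _ _
      _ = (∏ k, a.left k)⁻¹ := by rw [← Finset.prod_inv_distrib]
      _ = 1 := by rw [ha]; simp

lemma sB_mem {n : ℕ} (i j : Fin n) : sB i j ∈ WDsub n := by
  simp [WDsub, sB]

lemma sbarB_mem {n : ℕ} {i j : Fin n} (h : i ≠ j) : sbarB i j ∈ WDsub n := by
  show ∏ k, (if k = i ∨ k = j then (-1 : ℤˣ) else 1) = 1
  have step : ∀ k, (if k = i ∨ k = j then (-1 : ℤˣ) else 1)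
      = (if k = i then -1 else 1) * (if k = j then -1 else 1) := by
    intro k
    by_cases h1 : k = i <;> by_cases h2 : k = j <;> simp_all
  simp_rw [step, Finset.prod_mul_distrib, Finset.prod_ite_eq', Finset.mem_univ, if_true]
  norm_num

/-- the transposition `s_{ij}` as an element of `W_{D_n}`. -/
def sD {n : ℕ} (i j : Fin n) : WDsub n := ⟨sB i j, sB_mem i j⟩

/-- the transposition with sign changes `s̄_{ij}` as an element of `W_{D_n}` (junk value `1`
when `i = j`). -/
def sbarD {n : ℕ} (i j : Fin n) : WDsub n :=
  if h : i = j then 1 else ⟨sbarB i j, sbarB_mem h⟩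

/-- The signed-permutation action for `W_{D_n}`. -/
def actD {n : ℕ} (w : WDsub n) (i : Fin n) : ℂ × Fin n := actB w.1 i

/-- The (trivially signed) permutation action of `S_n`. -/
def actA (n : ℕ) (σ : Equiv.Perm (Fin n)) (i : Fin n) : ℂ × Fin n := (1, σ i)

/-- Generators of a rational double affine Hecke-Clifford algebra:
`x_i`, `y_i`, Clifford generators `c_i`, and group elements `w ∈ W`. -/
inductive HGen (n : ℕ) (G : Type) : Type
  | x : Fin n → HGen n G
  | y : Fin n → HGen n G
  | c : Fin n → HGen n G
  | g : G → HGen n G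

/-- The free algebra on the generators. -/
abbrev HF (n : ℕ) (G : Type) := FreeAlgebra ℂ (HGen n G)

def hX {n : ℕ} {G : Type} (i : Fin n) : HF n G := FreeAlgebra.ι ℂ (HGen.x i)
def hY {n : ℕ} {G : Type} (i : Fin n) : HF n G := FreeAlgebra.ι ℂ (HGen.y i)
def hC {n : ℕ} {G : Type} (i : Fin n) : HF n G := FreeAlgebra.ι ℂ (HGen.c i)
def hG {n : ℕ} {G : Type} (w : G) : HF n G := FreeAlgebra.ι ℂ (HGen.g w)

/-- The defining relations of a rational double affine Hecke-Clifford algebra, where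
`act w i = (sign, index)` records the (signed) permutation action `w(e_i) = sign • e_index`
of the group `W` on the basis vectors, and `R j i` is the prescribed value of the
commutator `[y_j, x_i]`. -/
inductive HRel (n : ℕ) (G : Type) [Group G] (act : G → Fin n → ℂ × Fin n)
    (R : Fin n → Fin n → HF n G) : HF n G → HF n G → Prop
  | cc (i : Fin n) : HRel n G act R (hC i * hC i) 1
  | canti {i j : Fin n} (h : i ≠ j) : HRel n G act R (hC i * hC j) (-(hC j * hC i))
  | xx (i j : Fin n) : HRel n G act R (hX i * hX j) (hX j * hX i)
  | yy (i j : Fin n) : HRel n G act R (hY i * hY j) (hY j * hY i)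
  | yc (i j : Fin n) : HRel n G act R (hY i * hC j) (hC j * hY i)
  | xcs (i : Fin n) : HRel n G act R (hX i * hC i) (-(hC i * hX i))
  | xc {i j : Fin n} (h : i ≠ j) : HRel n G act R (hX i * hC j) (hC j * hX i)
  | gone : HRel n G act R (hG (1 : G)) 1
  | gmul (w w' : G) : HRel n G act R (hG w * hG w') (hG (w * w'))
  | gx (w : G) (i : Fin n) :
      HRel n G act R (hG w * hX i) ((act w i).1 • (hX (act w i).2 * hG w))
  | gy (w : G) (i : Fin n) :
      HRel n G act R (hG w * hY i) ((act w i).1 • (hY (act w i).2 * hG w))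
  | gc (w : G) (i : Fin n) :
      HRel n G act R (hG w * hC i) ((act w i).1 • (hC (act w i).2 * hG w))
  | yx (j i : Fin n) : HRel n G act R (hY j * hX i) (hX i * hY j + R j i)

/-- A rational double affine Hecke-Clifford algebra, presented by generators and relations. -/
abbrev DaHCa (n : ℕ) (G : Type) [Group G] (act : G → Fin n → ℂ × Fin n)
    (R : Fin n → Fin n → HF n G) := RingQuot (HRel n G act R)

variable {n : ℕ} {G : Type} [Group G] {act : G → Fin n → ℂ × Fin n}
  {R : Fin n → Fin n → HF n G}

def dX (act : G → Fin n → ℂ × Fin n) (R : Fin n → Fin n → HF n G) (i : Fin n) :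
    DaHCa n G act R := RingQuot.mkAlgHom ℂ (HRel n G act R) (hX i)
def dY (act : G → Fin n → ℂ × Fin n) (R : Fin n → Fin n → HF n G) (i : Fin n) :
    DaHCa n G act R := RingQuot.mkAlgHom ℂ (HRel n G act R) (hY i)
def dC (act : G → Fin n → ℂ × Fin n) (R : Fin n → Fin n → HF n G) (i : Fin n) :
    DaHCa n G act R := RingQuot.mkAlgHom ℂ (HRel n G act R) (hC i)
def dG (act : G → Fin n → ℂ × Fin n) (R : Fin n → Fin n → HF n G) (w : G) :
    DaHCa n G act R := RingQuot.mkAlgHom ℂ (HRel n G act R) (hG w)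

/-- The right-hand side of the commutation relations `[y_j, x_i]` in the rational
DaHCa of type `A_{n-1}`:  `[y_j,x_i] = u(1+c_j c_i)s_{ji}` for `i ≠ j` and
`[y_i,x_i] = -u Σ_{k≠i} (1+c_k c_i)s_{ki}`. -/
def RA (n : ℕ) (u : ℂ) (j i : Fin n) : HF n (Equiv.Perm (Fin n)) :=
  if j = i then
    -(u • ∑ k ∈ Finset.univ.erase i, (1 + hC k * hC i) * hG (Equiv.swap k i))
  else
    u • ((1 + hC j * hC i) * hG (Equiv.swap j i))

/-- The rational double affine Hecke-Clifford algebra of type `A_{n-1}`. -/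
abbrev HCA (n : ℕ) (u : ℂ) := DaHCa n (Equiv.Perm (Fin n)) (actA n) (RA n u)

def xA {n : ℕ} {u : ℂ} (i : Fin n) : HCA n u := dX (actA n) (RA n u) i
def yA {n : ℕ} {u : ℂ} (i : Fin n) : HCA n u := dY (actA n) (RA n u) i
def cA {n : ℕ} {u : ℂ} (i : Fin n) : HCA n u := dC (actA n) (RA n u) i
def gA {n : ℕ} {u : ℂ} (w : Equiv.Perm (Fin n)) : HCA n u := dG (actA n) (RA n u) w

/-!
Expanding `[Y, X^l] = Σ_{a<l} X^a [Y, X] X^{l-1-a}` reduces both identities to pushing each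
term `(1 + c) s` of the defining commutator `[y_i, x_j]` through the powers of `x_j` on its
right: the transposition `s` turns them into powers of `s(x_j)`, and the Clifford factor `c`
anticommutes with `s(x_j)`, which produces the signs `(-1)^{l-1-a}`.
-/

section Commutator

variable {S A : Type*} [CommRing S] [Ring A] [Algebra S A]

theorem mul_pow_sub_pow_mul_eq_sum (Y X : A) (l : ℕ) :
    Y * X ^ l - X ^ l * Y = ∑ a ∈ Finset.range l, X ^ a * (Y * X - X * Y) * X ^ (l - 1 - a) := by
  induction l with
  | zero => simp
  | succ l ih =>
    have hsplit : Y * X ^ (l + 1) - X ^ (l + 1) * Y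
        = (Y * X ^ l - X ^ l * Y) * X + X ^ l * (Y * X - X * Y) := by noncomm_ring
    rw [hsplit, ih, Finset.sum_mul, Finset.sum_range_succ, Nat.add_sub_cancel, Nat.sub_self,
      pow_zero, mul_one]
    congr 1
    refine Finset.sum_congr rfl fun a ha => ?_
    rw [show l - a = l - 1 - a + 1 by have := Finset.mem_range.mp ha; omega, pow_succ, mul_assoc]

theorem mul_pow_eq_neg_one_pow_smul_of_mul_eq_neg {c Z : A} (h : c * Z = -(Z * c)) (k : ℕ) :
    c * Z ^ k = ((-1 : S) ^ k • Z ^ k) * c := by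
  have hc : SemiconjBy c Z (-Z) := by rw [SemiconjBy, h, neg_mul]
  rw [(hc.pow_right k).eq, neg_pow, Algebra.smul_def]
  simp

theorem sum_pow_mul_one_add_mul_mul_pow {X Z c g : A} (hg : g * X = Z * g)
    (hc : c * Z = -(Z * c)) (l : ℕ) :
    ∑ a ∈ Finset.range l, X ^ a * ((1 + c) * g) * X ^ (l - 1 - a)
      = ((∑ a ∈ Finset.range l, X ^ a * Z ^ (l - 1 - a))
          + (∑ a ∈ Finset.range l, (-1 : S) ^ (l - 1 - a) • (X ^ a * Z ^ (l - 1 - a))) * c) * g := by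
  rw [Finset.sum_mul, ← Finset.sum_add_distrib, Finset.sum_mul]
  refine Finset.sum_congr rfl fun a _ => ?_
  rw [mul_assoc, mul_assoc, (SemiconjBy.pow_right hg _).eq, add_mul, one_mul, ← mul_assoc c,
    mul_pow_eq_neg_one_pow_smul_of_mul_eq_neg (S := S) hc]
  simp only [mul_add, add_mul, smul_mul_assoc, mul_smul_comm, mul_assoc]

theorem mul_pow_sub_pow_mul_of_commutator_eq_sum {ι : Type*} {s : Finset ι} {Y X : A} {r : S}
    {Z c g : ι → A} (hYX : Y * X - X * Y = r • ∑ k ∈ s, (1 + c k) * g k)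
    (hg : ∀ k ∈ s, g k * X = Z k * g k) (hc : ∀ k ∈ s, c k * Z k = -(Z k * c k)) (l : ℕ) :
    Y * X ^ l - X ^ l * Y = r • ∑ k ∈ s,
      ((∑ a ∈ Finset.range l, X ^ a * Z k ^ (l - 1 - a))
        + (∑ a ∈ Finset.range l, (-1 : S) ^ (l - 1 - a) • (X ^ a * Z k ^ (l - 1 - a))) * c k)
        * g k := by
  calc Y * X ^ l - X ^ l * Y
      = ∑ a ∈ Finset.range l, X ^ a * (r • ∑ k ∈ s, (1 + c k) * g k) * X ^ (l - 1 - a) := by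
        rw [mul_pow_sub_pow_mul_eq_sum, hYX]
    _ = r • ∑ k ∈ s, ∑ a ∈ Finset.range l, X ^ a * ((1 + c k) * g k) * X ^ (l - 1 - a) := by
        simp only [mul_smul_comm, smul_mul_assoc, Finset.mul_sum, Finset.sum_mul, ← Finset.smul_sum]
        rw [Finset.sum_comm]
    _ = _ := by
        congr 1
        exact Finset.sum_congr rfl fun k hk => sum_pow_mul_one_add_mul_mul_pow (hg k hk) (hc k hk) l

theorem mul_pow_sub_pow_mul_of_commutator_eq {Y X Z c g : A} {r : S}
    (hYX : Y * X - X * Y = r • ((1 + c) * g)) (hg : g * X = Z * g) (hc : c * Z = -(Z * c))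
    (l : ℕ) :
    Y * X ^ l - X ^ l * Y = r •
      (((∑ a ∈ Finset.range l, X ^ a * Z ^ (l - 1 - a))
        + (∑ a ∈ Finset.range l, (-1 : S) ^ (l - 1 - a) • (X ^ a * Z ^ (l - 1 - a))) * c) * g) := by
  simpa only [Finset.sum_singleton] using
    mul_pow_sub_pow_mul_of_commutator_eq_sum (s := {()}) (Z := fun _ => Z) (c := fun _ => c)
      (g := fun _ => g) (by simpa only [Finset.sum_singleton] using hYX) (fun _ _ => hg)
      (fun _ _ => hc) l

end Commutator

section HCA

variable {u : ℂ}

theorem yA_mul_xA_sub (j i : Fin n) :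
    (yA j : HCA n u) * xA i - xA i * yA j = RingQuot.mkAlgHom ℂ _ (RA n u j i) := by
  have h := RingQuot.mkAlgHom_rel ℂ (HRel.yx (act := actA n) (R := RA n u) j i)
  rw [map_mul, map_add, map_mul] at h
  exact sub_eq_of_eq_add' h

theorem yA_mul_xA_sub_of_ne {i j : Fin n} (hij : i ≠ j) :
    (yA i : HCA n u) * xA j - xA j * yA i = u • ((1 + cA i * cA j) * gA (Equiv.swap i j)) := by
  rw [yA_mul_xA_sub, RA, if_neg hij]
  simp only [map_smul, map_mul, map_add, map_one]
  rfl

theorem yA_mul_xA_sub_self (i : Fin n) :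
    (yA i : HCA n u) * xA i - xA i * yA i
      = -(u • ∑ k ∈ Finset.univ.erase i, (1 + cA k * cA i) * gA (Equiv.swap k i)) := by
  rw [yA_mul_xA_sub, RA, if_pos rfl]
  simp only [map_neg, map_smul, map_sum, map_mul, map_add, map_one]
  rfl

theorem gA_mul_xA (w : Equiv.Perm (Fin n)) (i : Fin n) :
    (gA w : HCA n u) * xA i = xA (w i) * gA w := by
  have h := RingQuot.mkAlgHom_rel ℂ (HRel.gx (act := actA n) (R := RA n u) w i)
  rw [map_mul, map_smul, map_mul, actA, one_smul] at h
  exact h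

theorem cA_mul_cA_mul_xA {p q : Fin n} (hpq : p ≠ q) :
    ((cA p : HCA n u) * cA q) * xA p = -(xA p * (cA p * cA q)) := by
  have hp := RingQuot.mkAlgHom_rel ℂ (HRel.xcs (act := actA n) (R := RA n u) p)
  have hq := RingQuot.mkAlgHom_rel ℂ (HRel.xc (act := actA n) (R := RA n u) hpq)
  rw [map_mul, map_neg, map_mul] at hp
  rw [map_mul, map_mul] at hq
  change (xA p : HCA n u) * cA p = -(cA p * xA p) at hp
  change (xA p : HCA n u) * cA q = cA q * xA p at hq
  rw [mul_assoc, ← hq, ← mul_assoc, ← neg_neg (cA p * xA p), ← hp, neg_mul, mul_assoc]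

end HCA

/-- **Commutators with powers of `x`** (Khongsap-Wang, Lemma 3.1).  In the rational
double affine Hecke-Clifford algebra `H^c_{A_{n-1}}(u)`, for `l ≥ 0` and `i ≠ j`,
`[y_i, x_j^l] = u((x_j^l-x_i^l)/(x_j-x_i) + ((x_j^l-(-x_i)^l)/(x_j+x_i)) c_i c_j) s_{ij}`
and similarly for `[y_i, x_i^l]`, where the divided differences are written out as the
polynomial sums `Σ_{a=0}^{l-1} x_j^a x_i^{l-1-a}` and `Σ_{a=0}^{l-1} (-1)^{l-1-a} x_j^a x_i^{l-1-a}`. -/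
theorem daHCaA_comm_y_xpow (n : ℕ) (u : ℂ) (l : ℕ) (i j : Fin n) (hij : i ≠ j) :
    ((yA i : HCA n u) * xA j ^ l - xA j ^ l * yA i
      = u • (((∑ a ∈ Finset.range l, xA j ^ a * xA i ^ (l - 1 - a))
          + (∑ a ∈ Finset.range l, ((-1 : ℂ)) ^ (l - 1 - a) • (xA j ^ a * xA i ^ (l - 1 - a)))
            * (cA i * cA j)) * gA (Equiv.swap i j))) ∧
    ((yA i : HCA n u) * xA i ^ l - xA i ^ l * yA i
      = -(u • ∑ k ∈ Finset.univ.erase i,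
          (((∑ a ∈ Finset.range l, xA i ^ a * xA k ^ (l - 1 - a))
            + (∑ a ∈ Finset.range l, ((-1 : ℂ)) ^ (l - 1 - a) • (xA i ^ a * xA k ^ (l - 1 - a)))
              * (cA k * cA i)) * gA (Equiv.swap k i)))) := by
  refine ⟨mul_pow_sub_pow_mul_of_commutator_eq (yA_mul_xA_sub_of_ne hij)
    (by rw [gA_mul_xA, Equiv.swap_apply_right]) (cA_mul_cA_mul_xA hij) l, ?_⟩
  have hself : (yA i : HCA n u) * xA i - xA i * yA i
      = (-u) • ∑ k ∈ Finset.univ.erase i, (1 + cA k * cA i) * gA (Equiv.swap k i) :=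
    (yA_mul_xA_sub_self i).trans (neg_smul u _).symm
  refine (mul_pow_sub_pow_mul_of_commutator_eq_sum hself
    (fun k _ => by rw [gA_mul_xA, Equiv.swap_apply_right])
    (fun k hk => cA_mul_cA_mul_xA (Finset.ne_of_mem_erase hk)) l).trans (neg_smul (M := HCA n u) u _)
end
end

section
/- In the rational double affine Hecke–Clifford algebra H^c_{B_n}(u,v), for every integer l ≥ 0 and all i ≠ j, setting P = Σ_{a=0}^{l−1} x_j^a x_i^{l−1−a} and Q = Σ_{a=0}^{l−1} (−1)^{l−1−a} x_j^a x_i^{l−1−a}: [y_i, x_j^l] = u·(P + Q·c_i c_j)·s_{ij} − u·(Q − P·c_i c_j)·s̄_{ij}; and setting, for each k ≠ i, P_k = Σ_{a=0}^{l−1} x_i^a x_k^{l−1−a} and Q_k = Σ_{a=0}^{l−1} (−1)^{l−1−a} x_i^a x_k^{l−1−a}: [y_i, x_i^l] = −u·Σ_{k≠i} ( (P_k + Q_k·c_k c_i)·s_{ki} + (Q_k − P_k·c_k c_i)·s̄_{ki} ) − √2·v·R·τ_i, where R = x_i^{l−1} if l is odd and R = 0 if l is even. -/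
noncomputable section

variable {n : ℕ} {G : Type} [Group G] {act : G → Fin n → ℂ × Fin n}
  {R : Fin n → Fin n → HF n G}

/-- The right-hand side of the commutation relations `[y_j, x_i]` in the rational
DaHCa of type `B_n`. -/
def RB (n : ℕ) (u v : ℂ) (j i : Fin n) : HF n (WB n) :=
  if j = i then
    -(u • ∑ k ∈ Finset.univ.erase i,
        ((1 + hC k * hC i) * hG (sB k i) + (1 - hC k * hC i) * hG (sbarB k i)))
      - ((Real.sqrt 2 : ℂ) * v) • hG (tauB i)
  else
    u • ((1 + hC j * hC i) * hG (sB i j) - (1 - hC j * hC i) * hG (sbarB i j))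

/-- The rational double affine Hecke-Clifford algebra of type `B_n`. -/
abbrev HCB (n : ℕ) (u v : ℂ) := DaHCa n (WB n) actB (RB n u v)

def xB {n : ℕ} {u v : ℂ} (i : Fin n) : HCB n u v := dX actB (RB n u v) i
def yB {n : ℕ} {u v : ℂ} (i : Fin n) : HCB n u v := dY actB (RB n u v) i
def cB {n : ℕ} {u v : ℂ} (i : Fin n) : HCB n u v := dC actB (RB n u v) i
def gB {n : ℕ} {u v : ℂ} (w : WB n) : HCB n u v := dG actB (RB n u v) w


/-!
Expand `[y, x^l] = ∑_{a<l} x^a [y, x] x^(l-1-a)`, insert the defining value of `[y, x]` and move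
`x^(l-1-a)` to the left: `s_{ij}` turns `x_j` into `x_i`, `s̄_{ij}` turns it into `-x_i`, and
`c_i c_j` anticommutes with `x_i`; these sign changes produce the factors `(-1)^(l-1-a)` of `Q`.
Likewise `τ_i x_i = -x_i τ_i`, so the `τ_i`-term becomes `∑_{a<l} (-1)^(l-1-a) x_i^(l-1) τ_i`,
an alternating sum equal to `x_i^(l-1) τ_i` or `0` according to the parity of `l`.
-/

open Finset

section Sandwich

variable (K : Type*) {A : Type*} [CommRing K] [Ring A] [Algebra K A]

def sandwichSum (x : A) (l : ℕ) : A →ₗ[K] A :=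
  ∑ a ∈ range l, LinearMap.mulLeftRight K (x ^ a, x ^ (l - 1 - a))

variable {K}

@[simp]
lemma sandwichSum_apply (x w : A) (l : ℕ) :
    sandwichSum K x l w = ∑ a ∈ range l, x ^ a * w * x ^ (l - 1 - a) := by
  simp [sandwichSum]

lemma mul_pow_sub_pow_mul (y x : A) (l : ℕ) :
    y * x ^ l - x ^ l * y = sandwichSum K x l (y * x - x * y) := by
  rw [sandwichSum_apply]
  induction l with
  | zero => simp
  | succ m ih =>
    have hsucc : y * x ^ (m + 1) - x ^ (m + 1) * y
        = x * (y * x ^ m - x ^ m * y) + (y * x - x * y) * x ^ m := by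
      simp only [pow_succ', mul_sub, sub_mul, mul_assoc]; abel
    rw [hsucc, ih, mul_sum, sum_range_succ']
    congr 1
    · refine sum_congr rfl fun k _ => ?_
      rw [pow_succ', mul_assoc, mul_assoc, mul_assoc,
        show m + 1 - 1 - (k + 1) = m - 1 - k by omega]
    · simp

lemma neg_pow_eq_smul (z : A) (k : ℕ) : (-z) ^ k = (-1 : K) ^ k • z ^ k := by
  rw [← neg_one_smul K z, smul_pow]

lemma sum_range_neg_one_pow_reflect (l : ℕ) :
    ∑ a ∈ range l, (-1 : K) ^ (l - 1 - a) = if Odd l then 1 else 0 := by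
  rw [sum_range_reflect (fun a => (-1 : K) ^ a), neg_one_geom_sum]
  simp only [← Nat.not_odd_iff_even, ite_not]

variable {x z C s t : A}

lemma one_add_mul_mul_pow (hs : SemiconjBy s x z) (hC : SemiconjBy C z (-z)) (m : ℕ) :
    (1 + C) * s * x ^ m = (z ^ m + (-1 : K) ^ m • z ^ m * C) * s := by
  rw [mul_assoc, (hs.pow_right m).eq, ← mul_assoc, add_mul, one_mul, (hC.pow_right m).eq,
    neg_pow_eq_smul (K := K)]

lemma one_sub_mul_mul_pow (ht : SemiconjBy t x (-z)) (hC : SemiconjBy C z (-z)) (m : ℕ) :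
    (1 - C) * t * x ^ m = ((-1 : K) ^ m • z ^ m - z ^ m * C) * t := by
  have hC' : SemiconjBy C (-z) z := by simpa using hC.neg_right
  rw [mul_assoc, (ht.pow_right m).eq, ← mul_assoc, sub_mul, one_mul, (hC'.pow_right m).eq,
    neg_pow_eq_smul (K := K)]

lemma sandwichSum_one_add_mul (hs : SemiconjBy s x z) (hC : SemiconjBy C z (-z)) (l : ℕ) :
    sandwichSum K x l ((1 + C) * s)
      = (∑ a ∈ range l, x ^ a * z ^ (l - 1 - a)
          + (∑ a ∈ range l, (-1 : K) ^ (l - 1 - a) • (x ^ a * z ^ (l - 1 - a))) * C) * s := by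
  have hterm : ∀ a ∈ range l, x ^ a * ((1 + C) * s) * x ^ (l - 1 - a)
      = (x ^ a * z ^ (l - 1 - a) + (-1 : K) ^ (l - 1 - a) • (x ^ a * z ^ (l - 1 - a)) * C) * s :=
    fun a _ => by
      rw [mul_assoc, one_add_mul_mul_pow (K := K) hs hC, ← mul_assoc, mul_add,
        ← mul_assoc (x ^ a), mul_smul_comm]
  rw [sandwichSum_apply, sum_congr rfl hterm, ← sum_mul, sum_add_distrib, ← sum_mul]

lemma sandwichSum_one_sub_mul (ht : SemiconjBy t x (-z)) (hC : SemiconjBy C z (-z)) (l : ℕ) :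
    sandwichSum K x l ((1 - C) * t)
      = (∑ a ∈ range l, (-1 : K) ^ (l - 1 - a) • (x ^ a * z ^ (l - 1 - a))
          - (∑ a ∈ range l, x ^ a * z ^ (l - 1 - a)) * C) * t := by
  have hterm : ∀ a ∈ range l, x ^ a * ((1 - C) * t) * x ^ (l - 1 - a)
      = ((-1 : K) ^ (l - 1 - a) • (x ^ a * z ^ (l - 1 - a)) - x ^ a * z ^ (l - 1 - a) * C) * t :=
    fun a _ => by
      rw [mul_assoc, one_sub_mul_mul_pow (K := K) ht hC, ← mul_assoc, mul_sub,
        ← mul_assoc (x ^ a), mul_smul_comm]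
  rw [sandwichSum_apply, sum_congr rfl hterm, ← sum_mul, sum_sub_distrib, ← sum_mul]

lemma sandwichSum_of_semiconjBy_neg (ht : SemiconjBy t x (-x)) (l : ℕ) :
    sandwichSum K x l t = (if Odd l then x ^ (l - 1) else 0) * t := by
  have hterm : ∀ a ∈ range l,
      x ^ a * t * x ^ (l - 1 - a) = (-1 : K) ^ (l - 1 - a) • (x ^ (l - 1) * t) := by
    intro a ha
    rw [mul_assoc, (ht.pow_right _).eq, neg_pow_eq_smul (K := K), ← mul_assoc, mul_smul_comm,
      ← pow_add, show a + (l - 1 - a) = l - 1 by have := mem_range.mp ha; omega, smul_mul_assoc]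
  rw [sandwichSum_apply, sum_congr rfl hterm, ← sum_smul, sum_range_neg_one_pow_reflect,
    ite_smul, one_smul, zero_smul, ite_mul, zero_mul]

end Sandwich

lemma sB_comm (i j : Fin n) : sB i j = sB j i := by
  simp only [sB, Equiv.swap_comm]

lemma sbarB_comm (i j : Fin n) : sbarB i j = sbarB j i := by
  simp only [sbarB, Equiv.swap_comm, or_comm]

section HCB

variable {u v : ℂ}

lemma gB_mul_xB {w : WB n} {a b : Fin n} {ε : ℂ} (h : actB w a = (ε, b)) :
    (gB w : HCB n u v) * xB a = ε • (xB b * gB w) := by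
  simpa [xB, gB, dX, dG, h] using
    RingQuot.mkAlgHom_rel ℂ (HRel.gx (act := actB) (R := RB n u v) w a)

lemma semiconjBy_gB_sB (a b : Fin n) : SemiconjBy (gB (sB a b) : HCB n u v) (xB b) (xB a) := by
  have hact : actB (sB a b) b = (1, a) := by simp [actB, sB]
  rw [SemiconjBy, gB_mul_xB hact, one_smul]

lemma semiconjBy_gB_sbarB (a b : Fin n) :
    SemiconjBy (gB (sbarB a b) : HCB n u v) (xB b) (-xB a) := by
  have hact : actB (sbarB a b) b = (-1, a) := by simp [actB, sbarB]
  rw [SemiconjBy, gB_mul_xB hact]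
  -- `rw [neg_mul]` fails: the `Neg` of `RingQuot` matches the ring's only at default transparency.
  exact (neg_one_smul ℂ (xB a * gB _)).trans (neg_mul (xB a) _).symm

lemma semiconjBy_gB_tauB (a : Fin n) : SemiconjBy (gB (tauB a) : HCB n u v) (xB a) (-xB a) := by
  have hact : actB (tauB a) a = (-1, a) := by simp [actB, tauB]
  rw [SemiconjBy, gB_mul_xB hact]
  exact (neg_one_smul ℂ (xB a * gB _)).trans (neg_mul (xB a) _).symm

lemma semiconjBy_cB_mul_cB {a b : Fin n} (h : a ≠ b) :
    SemiconjBy (cB a * cB b : HCB n u v) (xB a) (-xB a) := by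
  have hxc : (xB a : HCB n u v) * cB b = cB b * xB a := by
    simpa [xB, cB, dX, dC] using RingQuot.mkAlgHom_rel ℂ (HRel.xc (R := RB n u v) h)
  have hxcs : (xB a : HCB n u v) * cB a = -(cB a * xB a) := by
    simpa [xB, cB, dX, dC] using RingQuot.mkAlgHom_rel ℂ (HRel.xcs (R := RB n u v) a)
  have hcx : (cB a : HCB n u v) * xB a = -(xB a * cB a) := by rw [hxcs, neg_neg]
  rw [SemiconjBy, mul_assoc, ← hxc, ← mul_assoc, hcx]
  grind

lemma yB_mul_xB_sub (a b : Fin n) :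
    (yB a : HCB n u v) * xB b - xB b * yB a
      = RingQuot.mkAlgHom ℂ (HRel n (WB n) actB (RB n u v)) (RB n u v a b) := by
  rw [sub_eq_iff_eq_add']
  simpa [xB, yB, dX, dY] using RingQuot.mkAlgHom_rel ℂ (HRel.yx (act := actB) (R := RB n u v) a b)

lemma yB_mul_xB_sub_of_ne {i j : Fin n} (h : i ≠ j) :
    (yB i : HCB n u v) * xB j - xB j * yB i
      = u • ((1 + cB i * cB j) * gB (sB i j) - (1 - cB i * cB j) * gB (sbarB i j)) := by
  rw [yB_mul_xB_sub, RB, if_neg h, sB_comm j i, sbarB_comm j i]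
  simp only [map_smul, map_sub, map_add, map_mul, map_one]
  rfl

lemma yB_mul_xB_sub_self (i : Fin n) :
    (yB i : HCB n u v) * xB i - xB i * yB i
      = -(u • ∑ k ∈ univ.erase i,
            ((1 + cB k * cB i) * gB (sB k i) + (1 - cB k * cB i) * gB (sbarB k i)))
        - ((Real.sqrt 2 : ℂ) * v) • gB (tauB i) := by
  rw [yB_mul_xB_sub, RB, if_pos rfl]
  simp only [map_smul, map_sub, map_add, map_mul, map_one, map_neg, map_sum]
  rfl

end HCB

theorem daHCaB_comm_y_xpow_general (n : ℕ) (u v : ℂ) (l : ℕ) (i j : Fin n)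
    (hij : i ≠ j) (P Q : HCB n u v) (Pk Qk : Fin n → HCB n u v)
    (hP : P = ∑ a ∈ Finset.range l, xB j ^ a * xB i ^ (l - 1 - a))
    (hQ : Q = ∑ a ∈ Finset.range l, ((-1 : ℂ)) ^ (l - 1 - a) • (xB j ^ a * xB i ^ (l - 1 - a)))
    (hPk : ∀ k, Pk k = ∑ a ∈ Finset.range l, xB i ^ a * xB k ^ (l - 1 - a))
    (hQk : ∀ k, Qk k
      = ∑ a ∈ Finset.range l, ((-1 : ℂ)) ^ (l - 1 - a) • (xB i ^ a * xB k ^ (l - 1 - a))) :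
    ((yB i : HCB n u v) * xB j ^ l - xB j ^ l * yB i
      = u • ((P + Q * (cB i * cB j)) * gB (sB i j))
        - u • ((Q - P * (cB i * cB j)) * gB (sbarB i j))) ∧
    ((yB i : HCB n u v) * xB i ^ l - xB i ^ l * yB i
      = -(u • ∑ k ∈ Finset.univ.erase i,
            ((Pk k + Qk k * (cB k * cB i)) * gB (sB k i)
              + (Qk k - Pk k * (cB k * cB i)) * gB (sbarB k i)))
        - ((Real.sqrt 2 : ℂ) * v) • ((if Odd l then xB i ^ (l - 1) else 0) * gB (tauB i))) := by
  constructor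
  · rw [mul_pow_sub_pow_mul (K := ℂ), yB_mul_xB_sub_of_ne hij, map_smul, map_sub,
      sandwichSum_one_add_mul (semiconjBy_gB_sB i j) (semiconjBy_cB_mul_cB hij),
      sandwichSum_one_sub_mul (semiconjBy_gB_sbarB i j) (semiconjBy_cB_mul_cB hij),
      smul_sub, hP, hQ]
  · rw [mul_pow_sub_pow_mul (K := ℂ), yB_mul_xB_sub_self]
    simp only [map_sub, map_neg, map_smul, map_sum, map_add]
    rw [sandwichSum_of_semiconjBy_neg (semiconjBy_gB_tauB i)]
    congr 3
    refine sum_congr rfl fun k hk => ?_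
    have hki := ne_of_mem_erase hk
    rw [sandwichSum_one_add_mul (semiconjBy_gB_sB k i) (semiconjBy_cB_mul_cB hki),
      sandwichSum_one_sub_mul (semiconjBy_gB_sbarB k i) (semiconjBy_cB_mul_cB hki), hPk, hQk]

/-- **Commutators with powers of `x` in type `B_n`** (Khongsap-Wang, Lemma 4.1).
In `H^c_{B_n}(u,v)`, for `l ≥ 0` and `i ≠ j`, with the divided-difference sums
`P = Σ_{a<l} x_j^a x_i^{l-1-a}`, `Q = Σ_{a<l} (-1)^{l-1-a} x_j^a x_i^{l-1-a}`:
`[y_i,x_j^l] = u(P + Q c_i c_j)s_{ij} - u(Q - P c_i c_j)s̄_{ij}`, and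
`[y_i,x_i^l] = -u Σ_{k≠i}((P_k + Q_k c_k c_i)s_{ki} + (Q_k - P_k c_k c_i)s̄_{ki}) - √2 v R τ_i`
where `R = x_i^{l-1}` for `l` odd and `R = 0` for `l` even. -/
theorem daHCaB_comm_y_xpow (n : ℕ) (hn : 2 ≤ n) (u v : ℂ) (l : ℕ) (i j : Fin n)
    (hij : i ≠ j) (P Q : HCB n u v) (Pk Qk : Fin n → HCB n u v)
    (hP : P = ∑ a ∈ Finset.range l, xB j ^ a * xB i ^ (l - 1 - a))
    (hQ : Q = ∑ a ∈ Finset.range l, ((-1 : ℂ)) ^ (l - 1 - a) • (xB j ^ a * xB i ^ (l - 1 - a)))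
    (hPk : ∀ k, Pk k = ∑ a ∈ Finset.range l, xB i ^ a * xB k ^ (l - 1 - a))
    (hQk : ∀ k, Qk k
      = ∑ a ∈ Finset.range l, ((-1 : ℂ)) ^ (l - 1 - a) • (xB i ^ a * xB k ^ (l - 1 - a))) :
    ((yB i : HCB n u v) * xB j ^ l - xB j ^ l * yB i
      = u • ((P + Q * (cB i * cB j)) * gB (sB i j))
        - u • ((Q - P * (cB i * cB j)) * gB (sbarB i j))) ∧
    ((yB i : HCB n u v) * xB i ^ l - xB i ^ l * yB i
      = -(u • ∑ k ∈ Finset.univ.erase i,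
            ((Pk k + Qk k * (cB k * cB i)) * gB (sB k i)
              + (Qk k - Pk k * (cB k * cB i)) * gB (sbarB k i)))
        - ((Real.sqrt 2 : ℂ) * v) • ((if Odd l then xB i ^ (l - 1) else 0) * gB (tauB i))) :=
  daHCaB_comm_y_xpow_general n u v l i j hij P Q Pk Qk hP hQ hPk hQk
end
end
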